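/- arXiv:math/0512562 — 3 statements merged into one kernel-verified Lean document; each statement's English description precedes it below -/
import Mathlib

section
/- Let G: C₁ → C₂ be an exact functor between abelian categories such that for all objects X, Y of C₁ the induced maps Hom(X,Y) → Hom(G X, G Y) and Ext¹(X,Y) → Ext¹(G X, G Y) are bijections. If G admits a right adjoint F which is conservative (F X ≠ 0 whenever X ≠ 0), then G is an equivalence of categories. -/
open CategoryTheory Limits

/-- An extension of `X` by `Y` in an abelian category:
a short exact sequence `0 → Y → E → X → 0`. -/
structure Extension {C : Type*} [Category C] [Abelian C] (X Y : C) where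
  E : C
  i : Y ⟶ E
  p : E ⟶ X
  w : i ≫ p = 0
  shortExact : (ShortComplex.mk i p w).ShortExact

/-- Two extensions are equivalent if there is an isomorphism between the middle
terms commuting with the structure maps.  `Ext¹(X, Y)` is the set of equivalence
classes of extensions of `X` by `Y` under this relation. -/
def Extension.Equiv {C : Type*} [Category C] [Abelian C] {X Y : C}
    (e₁ e₂ : Extension X Y) : Prop :=
  ∃ φ : e₁.E ≅ e₂.E, e₁.i ≫ φ.hom = e₂.i ∧ φ.hom ≫ e₂.p = e₁.p

/-- The image of an extension under an exact functor. -/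
noncomputable def Extension.map {C₁ : Type*} {C₂ : Type*} [Category C₁] [Category C₂]
    [Abelian C₁] [Abelian C₂] {X Y : C₁} (e : Extension X Y) (G : C₁ ⥤ C₂)
    [G.Additive] [PreservesFiniteLimits G] [PreservesFiniteColimits G] :
    Extension (G.obj X) (G.obj Y) where
  E := G.obj e.E
  i := G.map e.i
  p := G.map e.p
  w := by rw [← G.map_comp, e.w]; simp
  shortExact := e.shortExact.map_of_exact G

/-! Write `ε` for the counit of `G ⊣ F`. Since `G` is fully faithful, `F ε_A` is an isomorphism,
so `ε_A` is mono because `F` preserves kernels and reflects zero objects. Pulling the extension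
`0 → G F A → A → coker ε_A → 0` back along any `g : G B → coker ε_A` gives an extension of `G B`
by `G F A`; by surjectivity on `Ext¹` its middle term is some `G E`, and every map `G E → A`
factors through `ε_A` by adjunction, so `g` vanishes on the epimorphism `G E → G B`. Taking
`g = ε_Q` for `Q = coker ε_A`, the triangle identity gives `𝟙 (F Q) = 0`, hence `Q = 0` and
`ε_A` is an isomorphism. -/

namespace CategoryTheory

lemma ShortComplex.ShortExact.pullback {C : Type*} [Category C] [Abelian C] {S : ShortComplex C}
    (hS : S.ShortExact) {X : C} (g : X ⟶ S.X₃) :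
    (ShortComplex.mk (pullback.lift (f := g) (g := S.g) 0 S.f (by simp)) (pullback.fst g S.g)
      (pullback.lift_fst _ _ _)).ShortExact := by
  have := hS.mono_f
  have := hS.epi_g
  have := mono_of_mono_fac (pullback.lift_snd (f := g) (g := S.g) 0 S.f (by simp))
  refine .mk' (ShortComplex.exact_of_f_is_kernel _ (KernelFork.IsLimit.ofι' _ _ fun t ht => ?_))
    inferInstance inferInstance
  obtain ⟨u, hu⟩ := KernelFork.IsLimit.lift' hS.fIsKernel (t ≫ pullback.snd g S.g) (by
    rw [Category.assoc, ← pullback.condition, reassoc_of% ht, zero_comp])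
  refine ⟨u, pullback.hom_ext ?_ ?_⟩
  · rw [Category.assoc, pullback.lift_fst, comp_zero, ht]
  · rw [Category.assoc, pullback.lift_snd]
    exact hu

lemma Functor.mono_of_mono_map_of_reflects_isZero {C D : Type*} [Category C] [Category D]
    [Preadditive C] [HasZeroMorphisms D] (F : C ⥤ D) [F.PreservesZeroMorphisms]
    (hF : ∀ X : C, IsZero (F.obj X) → IsZero X) {X Y : C} (f : X ⟶ Y) [HasKernel f]
    [HasKernel (F.map f)] [PreservesLimit (parallelPair f 0) F] [Mono (F.map f)] : Mono f :=
  Preadditive.mono_of_isZero_kernel f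
    (hF _ ((isZero_kernel_of_mono (F.map f)).of_iso (PreservesKernel.iso F f)))

namespace Adjunction

variable {C D : Type*} [Category C] [Category D] {G : C ⥤ D} {F : D ⥤ C} (adj : G ⊣ F)

lemma comp_cokernel_π_counit_app [Preadditive D] {X : C} {A : D}
    [HasCokernel (adj.counit.app A)] (f : G.obj X ⟶ A) :
    f ≫ cokernel.π (adj.counit.app A) = 0 := by
  rw [← (adj.homEquiv X A).symm_apply_apply f, adj.homEquiv_counit, Category.assoc,
    cokernel.condition, comp_zero]

lemma isZero_obj_of_counit_app_eq_zero [HasZeroMorphisms C] [HasZeroMorphisms D]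
    [F.PreservesZeroMorphisms] {A : D} (h : adj.counit.app A = 0) : IsZero (F.obj A) := by
  rw [IsZero.iff_id_eq_zero, ← adj.right_triangle_components, h, F.map_zero, comp_zero]

lemma hom_to_cokernel_counit_app_eq_zero [Abelian C] [Abelian D] [G.Additive]
    [PreservesFiniteLimits G] [PreservesFiniteColimits G]
    (hExtSurj : ∀ (X Y : C) (e' : Extension (G.obj X) (G.obj Y)),
      ∃ e : Extension X Y, (e.map G).Equiv e')
    {A : D} [Mono (adj.counit.app A)] {B : C} (g : G.obj B ⟶ cokernel (adj.counit.app A)) :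
    g = 0 := by
  let S := ShortComplex.mk _ _ (cokernel.condition (adj.counit.app A))
  have hS : S.ShortExact :=
    .mk' (S.exact_of_g_is_cokernel (cokernelIsCokernel _)) ‹_› inferInstance
  obtain ⟨e, φ, -, hφ⟩ := hExtSurj B (F.obj A) ⟨_, _, _, _, hS.pullback g⟩
  dsimp only [Extension.map] at φ hφ
  have : Epi (G.map e.p) := (e.map G).shortExact.epi_g
  rw [← cancel_epi (G.map e.p), comp_zero, ← hφ, Category.assoc, pullback.condition,
    ← Category.assoc]
  exact adj.comp_cokernel_π_counit_app _

end Adjunction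

end CategoryTheory

theorem isEquivalence_of_fullyFaithful_ext_bijective_conservative_rightAdjoint_general
    {C₁ : Type*} {C₂ : Type*} [Category C₁] [Category C₂]
    [Abelian C₁] [Abelian C₂]
    (G : C₁ ⥤ C₂) [G.Additive] [PreservesFiniteLimits G] [PreservesFiniteColimits G]
    [G.Full] [G.Faithful]
    (hExtSurj : ∀ (X Y : C₁) (e' : Extension (G.obj X) (G.obj Y)),
      ∃ e : Extension X Y, (e.map G).Equiv e')
    (F : C₂ ⥤ C₁) (adj : G ⊣ F)
    (hF : ∀ X : C₂, IsZero (F.obj X) → IsZero X) :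
    G.IsEquivalence := by
  have : F.IsRightAdjoint := adj.isRightAdjoint
  have (A : C₂) : Mono (adj.counit.app A) := F.mono_of_mono_map_of_reflects_isZero hF _
  have (A : C₂) : Epi (adj.counit.app A) :=
    Preadditive.epi_of_isZero_cokernel _ <| hF _ <| adj.isZero_obj_of_counit_app_eq_zero <|
      adj.hom_to_cokernel_counit_app_eq_zero hExtSurj _
  have (A : C₂) : IsIso (adj.counit.app A) := isIso_of_mono_of_epi _
  exact adj.toEquivalence.isEquivalence_functor

/-- Let `G : C₁ ⥤ C₂` be an exact functor between abelian categories
such that the induced maps `Hom(X, Y) → Hom(G X, G Y)` are bijections (i.e. `G` is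
fully faithful) and the induced maps `Ext¹(X, Y) → Ext¹(G X, G Y)` are bijections
(stated as: the induced map on equivalence classes of extensions is surjective and
injective).  If `G` admits a right adjoint `F` which is conservative
(`F X ≠ 0` whenever `X ≠ 0`), then `G` is an equivalence of categories. -/
theorem isEquivalence_of_fullyFaithful_ext_bijective_conservative_rightAdjoint
    {C₁ : Type*} {C₂ : Type*} [Category C₁] [Category C₂]
    [Abelian C₁] [Abelian C₂]
    (G : C₁ ⥤ C₂) [G.Additive] [PreservesFiniteLimits G] [PreservesFiniteColimits G]
    [G.Full] [G.Faithful]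
    (hExtSurj : ∀ (X Y : C₁) (e' : Extension (G.obj X) (G.obj Y)),
      ∃ e : Extension X Y, (e.map G).Equiv e')
    (hExtInj : ∀ (X Y : C₁) (e₁ e₂ : Extension X Y),
      (e₁.map G).Equiv (e₂.map G) → e₁.Equiv e₂)
    (F : C₂ ⥤ C₁) (adj : G ⊣ F)
    (hF : ∀ X : C₂, IsZero (F.obj X) → IsZero X) :
    G.IsEquivalence :=
  isEquivalence_of_fullyFaithful_ext_bijective_conservative_rightAdjoint_general G hExtSurj F adj hF
end

section
/- Let G: C₁ → C₂ be an exact functor between abelian categories with right adjoint F, and suppose the unit id → F∘G is an isomorphism. For any object X' of C₂, the kernel Y' of the counit G(F(X')) → X' satisfies F(Y') = 0. Hence if F is conservative, the counit is a monomorphism. -/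
open CategoryTheory Limits

/-! Since the unit is an isomorphism, the triangle identity `η_{F X'} ≫ F(ε_{X'}) = 𝟙` makes
`F(ε_{X'})` an isomorphism. The right adjoint `F` preserves kernels, so
`F(ker ε_{X'}) ≅ ker F(ε_{X'}) = 0`. If `F` reflects zero objects, then `ker ε_{X'} = 0`. -/

namespace CategoryTheory

lemma Functor.isZero_obj_kernel_of_mono_map {C D : Type*} [Category C] [Category D]
    [HasZeroMorphisms C] [HasZeroMorphisms D] (F : C ⥤ D) [F.PreservesZeroMorphisms]
    {X Y : C} (f : X ⟶ Y) [HasKernel f] [PreservesLimit (parallelPair f 0) F] [Mono (F.map f)] :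
    IsZero (F.obj (Limits.kernel f)) :=
  (isZero_kernel_of_mono (F.map f)).of_iso (PreservesKernel.iso F f)

namespace Adjunction

variable {C D : Type*} [Category C] [Category D] {L : C ⥤ D} {R : D ⥤ C}

instance isIso_map_counit_app_of_isIso_unit (adj : L ⊣ R) [IsIso adj.unit] (Y : D) :
    IsIso (R.map (adj.counit.app Y)) :=
  isIso_of_hom_comp_eq_id _ (adj.right_triangle_components Y)

lemma isZero_obj_kernel_counit_app [HasZeroMorphisms C] [HasZeroMorphisms D] [HasKernels D]
    (adj : L ⊣ R) [IsIso adj.unit] (Y : D) : IsZero (R.obj (kernel (adj.counit.app Y))) :=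
  have := adj.isRightAdjoint
  R.isZero_obj_kernel_of_mono_map (adj.counit.app Y)

end Adjunction

end CategoryTheory

theorem kernel_counit_vanishes_and_counit_mono_general
    {C₁ : Type*} {C₂ : Type*} [Category C₁] [Category C₂]
    [Abelian C₁] [Abelian C₂]
    (G : C₁ ⥤ C₂)
    (F : C₂ ⥤ C₁) (adj : G ⊣ F) [IsIso adj.unit] :
    (∀ X' : C₂, IsZero (F.obj (kernel (adj.counit.app X')))) ∧
      ((∀ Y : C₂, IsZero (F.obj Y) → IsZero Y) →
        ∀ X' : C₂, Mono (adj.counit.app X')) :=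
  ⟨adj.isZero_obj_kernel_counit_app, fun reflects_isZero X' =>
    Preadditive.mono_of_isZero_kernel _ (reflects_isZero _ (adj.isZero_obj_kernel_counit_app X'))⟩

/-- Let `G : C₁ ⥤ C₂` be an exact functor between abelian categories
with right adjoint `F`, and suppose the unit `id → F ∘ G` is an isomorphism.
Then for any object `X'` of `C₂`, the kernel `Y'` of the counit `G (F X') ⟶ X'`
satisfies `F Y' = 0`; hence if `F` is conservative (reflects zero objects), the
counit is a monomorphism. -/
theorem kernel_counit_vanishes_and_counit_mono
    {C₁ : Type*} {C₂ : Type*} [Category C₁] [Category C₂]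
    [Abelian C₁] [Abelian C₂]
    (G : C₁ ⥤ C₂) [PreservesFiniteLimits G] [PreservesFiniteColimits G]
    (F : C₂ ⥤ C₁) (adj : G ⊣ F) [IsIso adj.unit] :
    (∀ X' : C₂, IsZero (F.obj (kernel (adj.counit.app X')))) ∧
      ((∀ Y : C₂, IsZero (F.obj Y) → IsZero Y) →
        ∀ X' : C₂, Mono (adj.counit.app X')) :=
  kernel_counit_vanishes_and_counit_mono_general G F adj
end

section
/- Let C be an abelian category closed under filtered colimits, and C⁰ a full subcategory equivalent to a small category, closed under cokernels of epimorphisms between its objects, such that every object of C⁰ is compact (Hom(X,−) commutes with filtered colimits for X ∈ C⁰) and every object of C is a filtered colimit of objects of C⁰. Then any contravariant left-exact functor F: C^op → Vect that sends colimits in C to limits is representable. -/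
/-!
Since every object is a colimit of objects of `C⁰`, the small family `C⁰` separates `C`; an
abelian category with a small separating family is well-powered and hence co-well-powered, and
with finite and filtered colimits it is cocomplete. The functor `X ↦ F X` (forgetting the linear
structure) still turns colimits into limits, i.e. `C ⥤ (Type)ᵒᵖ` preserves colimits, so the
special adjoint functor theorem provides a right adjoint `R`, and `R` applied to the one-point
set represents `F`.
-/

open CategoryTheory Limits Opposite

universe w w' v u

namespace CategoryTheory

variable {C : Type u} [Category.{v} C]

lemma ObjectProperty.isSeparating_of_forall_isColimit {P : ObjectProperty C}
    (h : ∀ Y : C, ∃ (J : Type w) (_ : Category.{w'} J) (D : J ⥤ C) (c : Cocone D),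
      (∀ j, P (D.obj j)) ∧ Nonempty (IsColimit c) ∧ Nonempty (c.pt ≅ Y)) :
    P.IsSeparating := by
  intro Y Z f g hfg
  obtain ⟨J, _, D, c, hD, ⟨hc⟩, ⟨e⟩⟩ := h Y
  have : e.hom ≫ f = e.hom ≫ g :=
    hc.hom_ext fun j => by simpa using hfg _ (hD j) (c.ι.app j ≫ e.hom)
  simpa using congrArg (e.inv ≫ ·) this

def Adjunction.representableByOfRightOp {G : Cᵒᵖ ⥤ Type v} {R : (Type v)ᵒᵖ ⥤ C}
    (adj : G.rightOp ⊣ R) : G.RepresentableBy (R.obj (Opposite.op PUnit.{v + 1})) where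
  homEquiv := (adj.homEquiv _ _).symm.trans
    ((opEquiv _ _).trans (Coyoneda.punitIso.app _).toEquiv)
  homEquiv_comp f g := by
    rw [Equiv.trans_apply, Adjunction.homEquiv_naturality_left_symm]
    rfl

lemma Functor.isRepresentable_of_preservesLimits_of_isSeparating
    [HasColimits C] [WellPowered.{v} Cᵒᵖ] {P : ObjectProperty C}
    [ObjectProperty.Small.{v} P] (hP : P.IsSeparating)
    (G : Cᵒᵖ ⥤ Type v) [PreservesLimits G] : G.IsRepresentable :=
  have := preservesColimits_rightOp G
  have := isLeftAdjoint_of_preservesColimits_of_isSeparating hP G.rightOp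
  (Adjunction.ofIsLeftAdjoint G.rightOp).representableByOfRightOp.isRepresentable

end CategoryTheory

theorem representable_of_leftExact_sends_colimits_to_limits_general
    {C : Type u} [Category.{v} C] [Abelian C] [HasFilteredColimitsOfSize.{v, v} C]
    (S : C → Prop)
    (hsmall : Small.{v} (ObjectProperty.FullSubcategory S))
    (hgen : ∀ Y : C, ∃ (J : Type v) (_ : SmallCategory J) (_ : IsFiltered J)
      (D : J ⥤ C) (c : Cocone D), (∀ j, S (D.obj j)) ∧
        Nonempty (IsColimit c) ∧ Nonempty (c.pt ≅ Y))
    (F : Cᵒᵖ ⥤ ModuleCat.{v} ℂ)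
    [PreservesLimitsOfSize.{v, v} F] :
    ∃ Z : C, Nonempty ((F ⋙ forget (ModuleCat.{v} ℂ)) ≅ yoneda.obj Z) := by
  have : HasColimitsOfSize.{v, v} C := has_colimits_of_finite_and_filtered
  have : ObjectProperty.Small.{v} S :=
    small_of_surjective (f := fun X : ObjectProperty.FullSubcategory S => ⟨X.obj, X.property⟩)
      fun X => ⟨⟨X.1, X.2⟩, rfl⟩
  have hsep : ObjectProperty.IsSeparating S :=
    ObjectProperty.isSeparating_of_forall_isColimit fun Y => by
      obtain ⟨J, _, _, D, c, hD, hc, e⟩ := hgen Y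
      exact ⟨J, _, D, c, hD, hc, e⟩
  have : WellPowered.{v} C := wellPowered_of_isDetecting hsep.isDetecting
  have := Functor.isRepresentable_of_preservesLimits_of_isSeparating hsep
    (F ⋙ forget (ModuleCat.{v} ℂ))
  exact ⟨_, ⟨(Functor.reprW _).symm⟩⟩

/-- Let `C` be an abelian category closed under filtered colimits and
`C⁰` (given by a predicate `S`) a full subcategory equivalent to a small category,
closed under cokernels of epimorphisms between its objects, such that every object
of `C⁰` is compact (its `Hom(X, −)` commutes with filtered colimits) and every
object of `C` is a filtered colimit of objects of `C⁰`.  Then any contravariant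
left-exact functor `F : Cᵒᵖ ⥤ Vect` sending colimits in `C` to limits is
representable. -/
theorem representable_of_leftExact_sends_colimits_to_limits
    {C : Type u} [Category.{v} C] [Abelian C] [HasFilteredColimitsOfSize.{v, v} C]
    (S : C → Prop)
    (hsmall : Small.{v} (ObjectProperty.FullSubcategory S))
    (hcoker : ∀ (X Y : C) (f : X ⟶ Y), Epi f → S X → S Y → S (cokernel f))
    (hcompact : ∀ X : C, S X →
      Nonempty (PreservesFilteredColimitsOfSize.{v, v} (coyoneda.obj (op X))))
    (hgen : ∀ Y : C, ∃ (J : Type v) (_ : SmallCategory J) (_ : IsFiltered J)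
      (D : J ⥤ C) (c : Cocone D), (∀ j, S (D.obj j)) ∧
        Nonempty (IsColimit c) ∧ Nonempty (c.pt ≅ Y))
    (F : Cᵒᵖ ⥤ ModuleCat.{v} ℂ)
    [PreservesFiniteLimits F] [PreservesLimitsOfSize.{v, v} F] :
    ∃ Z : C, Nonempty ((F ⋙ forget (ModuleCat.{v} ℂ)) ≅ yoneda.obj Z) :=
  representable_of_leftExact_sends_colimits_to_limits_general S hsmall hgen F
end
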